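/- arXiv:0904.2048 — 2 statements merged into one kernel-verified Lean document; each statement's English description precedes it below -/
import Mathlib

section
/- Let d ≥ 2, b ≥ 1, and let x, y : Fin d → ℝ and c : Fin b → ℝ have nonnegative entries, each summing to 1 (Schmidt vectors), with c not identically zero. If e_2(x ⊗ c) ≥ e_2(y ⊗ c), then e_2(x) ≥ e_2(y). (In other words, the I-concurrence C_2 is a monotone under catalysis.) -/
open Finset

/-- The `k`-th elementary symmetric polynomial of the entries of `x`. -/
noncomputable def esym {ι : Type*} [Fintype ι] (k : ℕ) (x : ι → ℝ) : ℝ :=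
  ∑ S ∈ Finset.univ.powersetCard k, ∏ i ∈ S, x i

/-- Tensor (Kronecker) product of two vectors. -/
def tensor {d₁ d₂ : ℕ} (x : Fin d₁ → ℝ) (y : Fin d₂ → ℝ) : Fin d₁ × Fin d₂ → ℝ :=
  fun p => x p.1 * y p.2

/- Since `2 e₂(v) = (∑ vᵢ)² - ∑ vᵢ²` (Newton's identity) and both sums are multiplicative under
`⊗`, when `∑ xᵢ = ∑ yᵢ = 1` the inequality `e₂(x ⊗ c) ≥ e₂(y ⊗ c)` reads `(∑ xᵢ²)(∑ cⱼ²) ≤ (∑ yᵢ²)(∑ cⱼ²)`.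
Cancelling the positive factor `∑ cⱼ²` gives `∑ xᵢ² ≤ ∑ yᵢ²`, i.e. `e₂(x) ≥ e₂(y)`. -/

lemma esym_eq_aeval_esymm {ι : Type*} [Fintype ι] (k : ℕ) (x : ι → ℝ) :
    esym k x = MvPolynomial.aeval x (MvPolynomial.esymm ι ℝ k) := by
  rw [MvPolynomial.aeval_esymm_eq_multiset_esymm, Finset.esymm_map_val, esym]

lemma two_mul_esym_two {ι : Type*} [Fintype ι] (x : ι → ℝ) :
    2 * esym 2 x = (∑ i, x i) ^ 2 - ∑ i, x i ^ 2 := by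
  have hsupp : {a ∈ antidiagonal 2 | a.1 < 2} = {(0, 2), (1, 1)} := by decide
  have newton := congrArg (MvPolynomial.aeval x) (MvPolynomial.mul_esymm_eq_sum ι ℝ 2)
  rw [hsupp, sum_pair (by decide)] at newton
  simp only [esym_eq_aeval_esymm, MvPolynomial.aeval_eq_eval, MvPolynomial.esymm_zero,
    MvPolynomial.esymm_one, MvPolynomial.psum, map_mul, map_pow, map_neg, map_one, map_add,
    map_sum, MvPolynomial.eval_ofNat, MvPolynomial.eval_X, Nat.cast_ofNat, Nat.reduceAdd, pow_zero,
    pow_one] at newton ⊢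
  linear_combination newton

section Tensor

variable {d₁ d₂ : ℕ} (x : Fin d₁ → ℝ) (y : Fin d₂ → ℝ)

lemma sum_tensor : ∑ p, tensor x y p = (∑ i, x i) * ∑ j, y j := by
  rw [Fintype.sum_mul_sum, Fintype.sum_prod_type]
  rfl

lemma sum_tensor_sq : ∑ p, tensor x y p ^ 2 = (∑ i, x i ^ 2) * ∑ j, y j ^ 2 := by
  simp only [tensor, mul_pow, Fintype.sum_mul_sum, Fintype.sum_prod_type]

lemma two_mul_esym_two_tensor :
    2 * esym 2 (tensor x y) =
      (∑ i, x i) ^ 2 * (∑ j, y j) ^ 2 - (∑ i, x i ^ 2) * ∑ j, y j ^ 2 := by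
  rw [two_mul_esym_two, sum_tensor, sum_tensor_sq, mul_pow]

end Tensor

lemma sum_sq_pos_of_ne_zero {ι : Type*} [Fintype ι] {c : ι → ℝ} (hc : c ≠ 0) :
    0 < ∑ j, c j ^ 2 := by
  obtain ⟨j, hj⟩ := Function.ne_iff.mp hc
  exact sum_pos' (fun i _ => sq_nonneg (c i)) ⟨j, mem_univ j, sq_pos_of_ne_zero hj⟩

theorem iConcurrence_catalysis_monotone_general (d b : ℕ)
    (x y : Fin d → ℝ) (c : Fin b → ℝ)
    (hxs : ∑ i, x i = 1) (hys : ∑ i, y i = 1)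
    (hc0 : c ≠ 0)
    (h : esym 2 (tensor x c) ≥ esym 2 (tensor y c)) :
    esym 2 x ≥ esym 2 y := by
  have hx := two_mul_esym_two x
  have hy := two_mul_esym_two y
  have hxc := two_mul_esym_two_tensor x c
  have hyc := two_mul_esym_two_tensor y c
  rw [hxs] at hx hxc
  rw [hys] at hy hyc
  have hsq : (∑ i, x i ^ 2) * (∑ j, c j ^ 2) ≤ (∑ i, y i ^ 2) * (∑ j, c j ^ 2) := by linarith
  have hsq_le := le_of_mul_le_mul_right hsq (sum_sq_pos_of_ne_zero hc0)
  linarith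

theorem iConcurrence_catalysis_monotone (d b : ℕ) (hd : 2 ≤ d) (hb : 1 ≤ b)
    (x y : Fin d → ℝ) (c : Fin b → ℝ)
    (hx : ∀ i, 0 ≤ x i) (hy : ∀ i, 0 ≤ y i) (hc : ∀ j, 0 ≤ c j)
    (hxs : ∑ i, x i = 1) (hys : ∑ i, y i = 1) (hcs : ∑ j, c j = 1)
    (hc0 : c ≠ 0)
    (h : esym 2 (tensor x c) ≥ esym 2 (tensor y c)) :
    esym 2 x ≥ esym 2 y :=
  iConcurrence_catalysis_monotone_general d b x y c hxs hys hc0 h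
end

section
/- Let d ≥ 2, b ≥ 1, and let x, y : Fin d → ℝ and c : Fin b → ℝ all have strictly positive entries. If e_{d·b − 1}(x ⊗ c) ≥ e_{d·b − 1}(y ⊗ c), then e_{d−1}(x) · e_d(x)^{b−1} ≥ e_{d−1}(y) · e_d(y)^{b−1}. -/
/-!
Removing one entry `(i, j)` from `x ⊗ c` leaves the row `i` with `b - 1` entries and every other
row complete, so `e_{db-1}(x ⊗ c)` factors as `e_{d-1}(x) e_d(x)^{b-1} · e_{b-1}(c) e_b(c)^{d-1}`.
The second factor is positive because `c` is, and can be cancelled from the hypothesis.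
-/

open Finset

section

variable {ι κ : Type*} [Fintype ι] [Fintype κ]

theorem esym_pos {k : ℕ} {x : ι → ℝ} (hx : ∀ i, 0 < x i) (hk : k ≤ Fintype.card ι) :
    0 < esym k x :=
  sum_pos (fun _ _ => prod_pos fun i _ => hx i) (powersetCard_nonempty.2 hk)

theorem esym_card (x : ι → ℝ) : esym (Fintype.card ι) x = ∏ i, x i := by
  rw [esym, ← card_univ, powersetCard_self, sum_singleton]

theorem powersetCard_card_sub_one_univ [DecidableEq ι] [Nonempty ι] :
    powersetCard (Fintype.card ι - 1) (univ : Finset ι) = univ.image univ.erase := by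
  ext S
  simp only [mem_powersetCard, subset_univ, true_and, mem_image, mem_univ]
  constructor
  · intro hS
    have := Fintype.card_pos (α := ι)
    obtain ⟨a, ha⟩ : ∃ a, Sᶜ = {a} := card_eq_one.1 (by rw [card_compl, hS]; omega)
    exact ⟨a, by rw [← compl_singleton, ← ha, compl_compl]⟩
  · rintro ⟨a, rfl⟩
    rw [card_erase_of_mem (mem_univ a), card_univ]

theorem esym_card_sub_one [DecidableEq ι] [Nonempty ι] (x : ι → ℝ) :
    esym (Fintype.card ι - 1) x = ∑ i, ∏ j ∈ univ.erase i, x j := by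
  rw [esym, powersetCard_card_sub_one_univ, sum_image fun a _ b _ => (erase_inj _ (mem_univ a)).1]

theorem prod_erase_pair [DecidableEq ι] [DecidableEq κ] {M : Type*} [CommMonoid M]
    (f : ι × κ → M) (a : ι) (b : κ) :
    ∏ p ∈ univ.erase (a, b), f p =
      (∏ i ∈ univ.erase a, ∏ j, f (i, j)) * ∏ j ∈ univ.erase b, f (a, j) := by
  have hsplit : univ.erase (a, b) = univ.erase a ×ˢ univ ∪ {a} ×ˢ univ.erase b := by
    ext ⟨i, j⟩
    simp only [mem_erase, mem_univ, and_true, mem_union, mem_product, mem_singleton, ne_eq,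
      Prod.mk.injEq]
    tauto
  rw [hsplit, prod_union (disjoint_left.2 (by simp; tauto)), prod_product, prod_product,
    prod_singleton]

theorem prod_erase_pair_mul [DecidableEq ι] [DecidableEq κ] [Nonempty κ] {M : Type*}
    [CommMonoid M] (x : ι → M) (c : κ → M) (a : ι) (b : κ) :
    ∏ p ∈ univ.erase (a, b), x p.1 * c p.2 =
      (∏ i ∈ univ.erase a, x i) * (∏ i, x i) ^ (Fintype.card κ - 1) *
        ((∏ j ∈ univ.erase b, c j) * (∏ j, c j) ^ (Fintype.card ι - 1)) := by
  obtain ⟨m, hm⟩ : ∃ m, Fintype.card κ = m + 1 :=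
    Nat.exists_eq_succ_of_ne_zero Fintype.card_ne_zero
  rw [prod_erase_pair]
  simp only [prod_mul_distrib, prod_const, card_erase_of_mem (mem_univ _), card_univ, prod_pow]
  rw [← mul_prod_erase univ x (mem_univ a), hm, Nat.add_sub_cancel, pow_succ, mul_pow]
  ac_rfl

theorem esym_card_mul_card_sub_one [Nonempty ι] [Nonempty κ] (x : ι → ℝ) (c : κ → ℝ) :
    esym (Fintype.card ι * Fintype.card κ - 1) (fun p : ι × κ => x p.1 * c p.2) =
      esym (Fintype.card ι - 1) x * esym (Fintype.card ι) x ^ (Fintype.card κ - 1) *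
        (esym (Fintype.card κ - 1) c * esym (Fintype.card κ) c ^ (Fintype.card ι - 1)) := by
  classical
  rw [← Fintype.card_prod, esym_card_sub_one, esym_card_sub_one, esym_card_sub_one, esym_card,
    esym_card, Fintype.sum_prod_type]
  simp_rw [prod_erase_pair_mul, ← mul_sum, ← sum_mul]

end

theorem secondTop_catalysis_general (d b : ℕ) (hd : 2 ≤ d) (hb : 1 ≤ b)
    (x y : Fin d → ℝ) (c : Fin b → ℝ)
    (hc : ∀ j, 0 < c j)
    (h : esym (d * b - 1) (tensor x c) ≥ esym (d * b - 1) (tensor y c)) :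
    esym (d - 1) x * (esym d x) ^ (b - 1) ≥ esym (d - 1) y * (esym d y) ^ (b - 1) := by
  have : Nonempty (Fin d) := Fin.pos_iff_nonempty.1 (by omega)
  have : Nonempty (Fin b) := Fin.pos_iff_nonempty.1 hb
  have hfactor (z : Fin d → ℝ) : esym (d * b - 1) (tensor z c) =
      esym (d - 1) z * esym d z ^ (b - 1) * (esym (b - 1) c * esym b c ^ (d - 1)) := by
    have := esym_card_mul_card_sub_one z c
    rwa [Fintype.card_fin, Fintype.card_fin] at this
  have hc_factor_pos : 0 < esym (b - 1) c * esym b c ^ (d - 1) :=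
    mul_pos (esym_pos hc (by simp)) (pow_pos (esym_pos hc (by simp)) _)
  rw [hfactor, hfactor] at h
  exact le_of_mul_le_mul_right h hc_factor_pos

theorem secondTop_catalysis (d b : ℕ) (hd : 2 ≤ d) (hb : 1 ≤ b)
    (x y : Fin d → ℝ) (c : Fin b → ℝ)
    (hx : ∀ i, 0 < x i) (hy : ∀ i, 0 < y i) (hc : ∀ j, 0 < c j)
    (h : esym (d * b - 1) (tensor x c) ≥ esym (d * b - 1) (tensor y c)) :
    esym (d - 1) x * (esym d x) ^ (b - 1) ≥ esym (d - 1) y * (esym d y) ^ (b - 1) :=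
  secondTop_catalysis_general d b hd hb x y c hc h
end
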